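/- arXiv:1104.0196 — 2 statements merged into one kernel-verified Lean document; each statement's English description precedes it below -/
import Mathlib

section
/- Fix an integer n ≥ 1 and let (c_*, ε) ∈ 𝒯^{(2)}_{2n}. Then the fiber (ι^{(2)})^{-1}(c_*, ε) ⊆ 𝒜¹_{2n} is nonempty (so ι^{(2)} is surjective), and the function (r_*, p_*) ↦ τ_{p_*} on this fiber attains its minimum at exactly one element, namely the pair (r_*, p_*) determined by: μ_e(r_*) = 0 and μ_e(p_*) = μ_e(c_*) whenever e is odd, and also whenever e is even with μ_e(c_*) even and positive and ε(e) = 0; and μ_e(r_*) = μ_e(c_*) and μ_e(p_*) = 0 for all other positive integers e. -/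
/-- A partition: a nonincreasing list of positive integers (possibly empty). -/
def IsPartition (p : List ℕ) : Prop := p.Pairwise (· ≥ ·) ∧ ∀ x ∈ p, 0 < x

/-- `𝒫̃`: partitions with an even number of parts in which the parts pair up:
`p₁ = p₂, p₃ = p₄, …` (stated 0-indexed). -/
def Ptilde : Set (List ℕ) :=
  {p | IsPartition p ∧ Even p.length ∧ ∀ i, p.getD (2 * i) 0 = p.getD (2 * i + 1) 0}

/-- `𝒮^κ` for `κ ∈ {0,1}`: partitions with all parts even (and, if `κ = 0`,
an even number of parts). -/
def SK (κ : ℕ) : Set (List ℕ) :=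
  {r | IsPartition r ∧ (∀ x ∈ r, x % 2 = 0) ∧ (κ = 0 → Even r.length)}

/-- `𝒮^κ_N`. -/
def SKN (κ N : ℕ) : Set (List ℕ) := {r | r ∈ SK κ ∧ r.sum = N}

/-- `𝒜^κ_{2n} = {(r_*, p_*) ∈ 𝒮^κ × 𝒫̃ : |r_*| + |p_*| = 2n}`. -/
def AK (κ n : ℕ) : Set (List ℕ × List ℕ) :=
  {rp | rp.1 ∈ SK κ ∧ rp.2 ∈ Ptilde ∧ rp.1.sum + rp.2.sum = 2 * n}

/-- The partition whose multiset of parts is the disjoint union of the multisets of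
parts of `r` and `p`: sort `r ++ p` nonincreasingly. -/
def pmerge (r p : List ℕ) : List ℕ := (r ++ p).mergeSort (fun a b => decide (b ≤ a))

/-- `𝒯_{2n}`: partitions of `2n` in which every odd part has even multiplicity. -/
def Tset (n : ℕ) : Set (List ℕ) :=
  {c | IsPartition c ∧ c.sum = 2 * n ∧ ∀ j, j % 2 = 1 → Even (c.count j)}

/-- The domain of the function `ε` in a pair `(c_*, ε) ∈ 𝒯^{(2)}_{2n}`: even positive
integers `j` whose multiplicity in `c_*` is even and positive. -/
def epsDom (c : List ℕ) (j : ℕ) : Prop :=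
  j % 2 = 0 ∧ 0 < j ∧ Even (c.count j) ∧ 0 < c.count j


/-!
A pair `(r, p)` in the fiber of `ι⁽²⁾` over `(c, ε)` splits the multiset of parts of `c`. A part
`e` that is odd, or even with `ε e = 0`, can never lie in `r` (whose parts are even and, on the
domain of `ε`, are exactly the `e` with `ε e = 1`), so all its copies lie in `p`. Putting exactly
these parts into `p` and the rest into `r` gives an element of the fiber, because every part
of that `p` has even multiplicity and a nonincreasing list with even multiplicities pairs up.
Its `p` is then a sub-multiset of the `p` of every element of the fiber, so it has the fewest
parts, and equality of lengths forces equality of the `p`'s and hence of the `r`'s.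
-/

theorem IsPartition.filter {l : List ℕ} (hl : IsPartition l) (q : ℕ → Bool) :
    IsPartition (l.filter q) :=
  ⟨hl.1.filter q, fun x hx => hl.2 x (List.mem_of_mem_filter hx)⟩

theorem pmerge_perm (r p : List ℕ) : (pmerge r p).Perm (r ++ p) :=
  List.mergeSort_perm _ _

theorem pmerge_pairwise (r p : List ℕ) : (pmerge r p).Pairwise (· ≥ ·) :=
  (List.pairwise_mergeSort (le := fun a b : ℕ => decide (b ≤ a))
    (fun _ _ _ => by simp only [decide_eq_true_eq]; omega)
    (fun _ _ => by simp only [Bool.or_eq_true, decide_eq_true_eq]; omega) (r ++ p)).imp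
    (by simp)

theorem pmerge_eq_iff_perm {r p c : List ℕ} (hc : c.Pairwise (· ≥ ·)) :
    pmerge r p = c ↔ (r ++ p).Perm c :=
  ⟨fun h => h ▸ (pmerge_perm r p).symm,
    fun h => ((pmerge_perm r p).trans h).eq_of_pairwise' (pmerge_pairwise r p) hc⟩

theorem count_add_count_of_pmerge_eq {r p c : List ℕ} (h : pmerge r p = c) (e : ℕ) :
    r.count e + p.count e = c.count e := by
  rw [← h, (pmerge_perm r p).count_eq, List.count_append]

theorem eq_of_pmerge_eq_pmerge {r r' p : List ℕ} (h : pmerge r p = pmerge r' p)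
    (hr : r.Pairwise (· ≥ ·)) (hr' : r'.Pairwise (· ≥ ·)) : r = r' :=
  ((List.perm_append_right_iff p).mp
    ((pmerge_perm r p).symm.trans (h ▸ pmerge_perm r' p))).eq_of_pairwise' hr hr'

theorem eq_of_pairwise_ge_of_even_count {a b : ℕ} {t : List ℕ}
    (hs : (a :: b :: t).Pairwise (· ≥ ·)) (ha : Even ((a :: b :: t).count a)) : a = b := by
  have hmem : a ∈ b :: t := by
    rw [List.count_cons_self] at ha
    exact List.count_pos_iff.mp (Nat.pos_of_ne_zero fun h0 => by simp [h0] at ha)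
  rcases List.mem_cons.mp hmem with rfl | hat
  · rfl
  · have hab : a ≥ b := List.rel_of_pairwise_cons hs (List.mem_cons_self ..)
    have hba : b ≥ a := List.rel_of_pairwise_cons hs.of_cons hat
    omega

theorem even_length_and_pairs_of_even_count : ∀ l : List ℕ, l.Pairwise (· ≥ ·) →
    (∀ e, Even (l.count e)) → Even l.length ∧ ∀ i, l.getD (2 * i) 0 = l.getD (2 * i + 1) 0
  | [], _, _ => ⟨Even.zero, fun _ => rfl⟩
  | [a], _, he => absurd (he a) (by simp)
  | a :: b :: t, hs, he => by
    obtain rfl := eq_of_pairwise_ge_of_even_count hs (he a)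
    have ht : ∀ e, Even (t.count e) := fun e => by
      have := he e
      simp only [List.count_cons] at this
      split_ifs at this <;> simpa [Nat.even_add_one] using this
    obtain ⟨hlen, hpair⟩ := even_length_and_pairs_of_even_count t hs.of_cons.of_cons ht
    refine ⟨by simpa [Nat.even_add_one] using hlen, fun i => ?_⟩
    cases i with
    | zero => rfl
    | succ i => simpa [Nat.mul_succ] using hpair i

theorem mem_Ptilde_of_even_count {p : List ℕ} (hp : IsPartition p) (he : ∀ e, Even (p.count e)) :
    p ∈ Ptilde :=
  ⟨hp, even_length_and_pairs_of_even_count p hp.1 he⟩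

theorem List.count_filter_of_not {α : Type*} [BEq α] [LawfulBEq α] {q : α → Bool} {a : α}
    (l : List α) (h : ¬ q a) : (l.filter q).count a = 0 :=
  List.count_eq_zero_of_not_mem fun hm => h (List.of_mem_filter hm)

/-- The parts `e` that every element of the fiber of `ι⁽²⁾` over `(c, ε)` puts into `p`. -/
def GoesToP (c : List ℕ) (ε : ℕ → ℕ) (e : ℕ) : Prop :=
  e % 2 = 1 ∨ (e % 2 = 0 ∧ Even (c.count e) ∧ 0 < c.count e ∧ ε e = 0)

instance (c : List ℕ) (ε : ℕ → ℕ) : DecidablePred (GoesToP c ε) :=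
  fun _ => inferInstanceAs (Decidable (_ ∨ _))

/-- The fiber of `ι⁽²⁾ : 𝒜¹_{2n} → 𝒯⁽²⁾_{2n}` over `(c, ε)`. -/
def Fiber (n : ℕ) (c : List ℕ) (ε : ℕ → ℕ) : Set (List ℕ × List ℕ) :=
  {rp | rp ∈ AK 1 n ∧ pmerge rp.1 rp.2 = c ∧ ∀ j, epsDom c j → (ε j = 1 ↔ j ∈ rp.1)}

def canonicalSplit (c : List ℕ) (ε : ℕ → ℕ) : List ℕ × List ℕ :=
  (c.filter fun e => !decide (GoesToP c ε e), c.filter fun e => decide (GoesToP c ε e))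

section CanonicalSplit

variable {n : ℕ} {c : List ℕ} {ε : ℕ → ℕ} {e : ℕ}

theorem count_canonicalSplit_fst (h : GoesToP c ε e) : (canonicalSplit c ε).1.count e = 0 :=
  List.count_filter_of_not c (by simpa using h)

theorem count_canonicalSplit_snd (h : GoesToP c ε e) :
    (canonicalSplit c ε).2.count e = c.count e :=
  List.count_filter (by simpa using h)

theorem count_canonicalSplit_fst_of_not (h : ¬ GoesToP c ε e) :
    (canonicalSplit c ε).1.count e = c.count e :=
  List.count_filter (by simpa using h)

theorem count_canonicalSplit_snd_of_not (h : ¬ GoesToP c ε e) :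
    (canonicalSplit c ε).2.count e = 0 :=
  List.count_filter_of_not c (by simpa using h)

theorem canonicalSplit_perm (c : List ℕ) (ε : ℕ → ℕ) :
    ((canonicalSplit c ε).1 ++ (canonicalSplit c ε).2).Perm c :=
  List.perm_append_comm.trans (List.filter_append_perm _ c)

theorem mem_canonicalSplit_fst {x : ℕ} :
    x ∈ (canonicalSplit c ε).1 ↔ x ∈ c ∧ ¬ GoesToP c ε x := by
  simp [canonicalSplit]

theorem canonicalSplit_mem_fiber (hc : c ∈ Tset n) (hε : ∀ j, epsDom c j → ε j ≤ 1) :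
    canonicalSplit c ε ∈ Fiber n c ε := by
  obtain ⟨hcpart, hcsum, hodd⟩ := hc
  have hperm := canonicalSplit_perm c ε
  have hr : (canonicalSplit c ε).1 ∈ SK 1 := by
    refine ⟨hcpart.filter _, fun x hx => ?_, by omega⟩
    have := (mem_canonicalSplit_fst.mp hx).2
    simp only [GoesToP, not_or] at this
    omega
  have hp : (canonicalSplit c ε).2 ∈ Ptilde := by
    refine mem_Ptilde_of_even_count (hcpart.filter _) fun e => ?_
    by_cases he : GoesToP c ε e
    · rw [count_canonicalSplit_snd he]
      rcases he with he | ⟨_, heven, _⟩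
      exacts [hodd e he, heven]
    · rw [count_canonicalSplit_snd_of_not he]
      exact Even.zero
  refine ⟨⟨hr, hp, by rw [← List.sum_append, hperm.sum_eq, hcsum]⟩,
    (pmerge_eq_iff_perm hcpart.1).mpr hperm, fun j hj => ?_⟩
  have hle := hε j hj
  obtain ⟨hj2, -, hjeven, hjcount⟩ := hj
  rw [mem_canonicalSplit_fst, GoesToP]
  have hjc : j ∈ c := List.count_pos_iff.mp hjcount
  constructor
  · intro h1
    exact ⟨hjc, by omega⟩
  · rintro ⟨-, hnot⟩
    push Not at hnot
    have := hnot.2 hj2 hjeven hjcount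
    omega

theorem count_fst_eq_zero_of_mem_fiber (hc : IsPartition c) {rp : List ℕ × List ℕ}
    (hrp : rp ∈ Fiber n c ε) (he : GoesToP c ε e) : rp.1.count e = 0 := by
  refine List.count_eq_zero_of_not_mem fun hmem => ?_
  rcases he with hodd | ⟨h2, heven, hpos, h0⟩
  · have := hrp.1.1.2.1 e hmem
    omega
  · have := (hrp.2.2 e ⟨h2, hc.2 e (List.count_pos_iff.mp hpos), heven, hpos⟩).mpr hmem
    omega

theorem canonicalSplit_snd_subperm (hc : IsPartition c) {rp : List ℕ × List ℕ}
    (hrp : rp ∈ Fiber n c ε) : (canonicalSplit c ε).2.Subperm rp.2 := by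
  refine List.subperm_ext_iff.mpr fun x hx => ?_
  have hgo : GoesToP c ε x := by simpa [canonicalSplit] using (List.mem_filter.mp hx).2
  have := count_add_count_of_pmerge_eq hrp.2.1 x
  rw [count_canonicalSplit_snd hgo, ← this, count_fst_eq_zero_of_mem_fiber hc hrp hgo]
  omega

theorem eq_canonicalSplit_of_mem_fiber (hc : c ∈ Tset n) (hε : ∀ j, epsDom c j → ε j ≤ 1)
    {rp : List ℕ × List ℕ} (hrp : rp ∈ Fiber n c ε)
    (hlen : rp.2.length = (canonicalSplit c ε).2.length) : rp = canonicalSplit c ε := by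
  have hcan := canonicalSplit_mem_fiber hc hε
  have hp : (canonicalSplit c ε).2 = rp.2 :=
    ((canonicalSplit_snd_subperm hc.1 hrp).perm_of_length_le hlen.le).eq_of_pairwise'
      hcan.1.2.1.1.1 hrp.1.2.1.1.1
  have hr : rp.1 = (canonicalSplit c ε).1 := by
    refine eq_of_pmerge_eq_pmerge (p := rp.2) ?_ hrp.1.1.1.1 hcan.1.1.1.1
    rw [hrp.2.1, ← hp, hcan.2.1]
  exact Prod.ext hr hp.symm

end CanonicalSplit

theorem stmt1_general (n : ℕ) (c : List ℕ) (ε : ℕ → ℕ)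
    (hc : c ∈ Tset n) (hε : ∀ j, epsDom c j → ε j ≤ 1) :
    (∃ rp, (rp ∈ AK 1 n ∧ pmerge rp.1 rp.2 = c ∧
        ∀ j, epsDom c j → (ε j = 1 ↔ j ∈ rp.1))) ∧
    ∃ rp : List ℕ × List ℕ,
      (rp ∈ AK 1 n ∧ pmerge rp.1 rp.2 = c ∧
        ∀ j, epsDom c j → (ε j = 1 ↔ j ∈ rp.1)) ∧
      (∀ e, 0 < e →
        ((e % 2 = 1 ∨ (e % 2 = 0 ∧ Even (c.count e) ∧ 0 < c.count e ∧ ε e = 0)) →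
          rp.1.count e = 0 ∧ rp.2.count e = c.count e) ∧
        (¬(e % 2 = 1 ∨ (e % 2 = 0 ∧ Even (c.count e) ∧ 0 < c.count e ∧ ε e = 0)) →
          rp.1.count e = c.count e ∧ rp.2.count e = 0)) ∧
      (∀ rp' : List ℕ × List ℕ,
        (rp' ∈ AK 1 n ∧ pmerge rp'.1 rp'.2 = c ∧
          ∀ j, epsDom c j → (ε j = 1 ↔ j ∈ rp'.1)) →
        rp.2.length ≤ rp'.2.length ∧ (rp'.2.length = rp.2.length → rp' = rp)) := by
  have hcan : canonicalSplit c ε ∈ Fiber n c ε := canonicalSplit_mem_fiber hc hε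
  refine ⟨⟨_, hcan⟩, _, hcan, fun e _ => ⟨fun h => ?_, fun h => ?_⟩, fun rp hrp => ?_⟩
  · exact ⟨count_canonicalSplit_fst h, count_canonicalSplit_snd h⟩
  · exact ⟨count_canonicalSplit_fst_of_not h, count_canonicalSplit_snd_of_not h⟩
  · exact ⟨(canonicalSplit_snd_subperm hc.1 hrp).length_le,
      eq_canonicalSplit_of_mem_fiber hc hε hrp⟩

/-- for `n ≥ 1` and `(c, ε) ∈ 𝒯^{(2)}_{2n}` (with `ε` taking values in
`{0,1}` on its domain), the fiber of `ι^{(2)} : 𝒜¹_{2n} → 𝒯^{(2)}_{2n}` over `(c, ε)`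
is nonempty and the function `(r,p) ↦ τ_p` attains its minimum on this fiber at
exactly one element, namely the explicitly described one. -/
theorem stmt1 (n : ℕ) (hn : 1 ≤ n) (c : List ℕ) (ε : ℕ → ℕ)
    (hc : c ∈ Tset n) (hε : ∀ j, epsDom c j → ε j ≤ 1) :
    (∃ rp, (rp ∈ AK 1 n ∧ pmerge rp.1 rp.2 = c ∧
        ∀ j, epsDom c j → (ε j = 1 ↔ j ∈ rp.1))) ∧
    ∃ rp : List ℕ × List ℕ,
      (rp ∈ AK 1 n ∧ pmerge rp.1 rp.2 = c ∧
        ∀ j, epsDom c j → (ε j = 1 ↔ j ∈ rp.1)) ∧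
      (∀ e, 0 < e →
        ((e % 2 = 1 ∨ (e % 2 = 0 ∧ Even (c.count e) ∧ 0 < c.count e ∧ ε e = 0)) →
          rp.1.count e = 0 ∧ rp.2.count e = c.count e) ∧
        (¬(e % 2 = 1 ∨ (e % 2 = 0 ∧ Even (c.count e) ∧ 0 < c.count e ∧ ε e = 0)) →
          rp.1.count e = c.count e ∧ rp.2.count e = 0)) ∧
      (∀ rp' : List ℕ × List ℕ,
        (rp' ∈ AK 1 n ∧ pmerge rp'.1 rp'.2 = c ∧
          ∀ j, epsDom c j → (ε j = 1 ↔ j ∈ rp'.1)) →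
        rp.2.length ≤ rp'.2.length ∧ (rp'.2.length = rp.2.length → rp' = rp)) :=
  stmt1_general n c ε hc hε
end

section
/- For every even natural number N and every κ ∈ {0,1}, the map Ξ restricts to a bijection from 𝒮^κ_N onto ℛ_{N+κ}. In particular, for every r_* ∈ 𝒮^κ_N the sequence Ξ(r_*) is a nonincreasing sequence of positive integers lying in ℛ, with |Ξ(r_*)| = N + κ. -/
/-- `𝒬`: partitions in which every even part has even multiplicity. -/
def Qset : Set (List ℕ) :=
  {c | IsPartition c ∧ ∀ j, j % 2 = 0 → Even (c.count j)}

/-- `𝒬_N`. -/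
def QN (N : ℕ) : Set (List ℕ) := {c | c ∈ Qset ∧ c.sum = N}

/-- The odd parts of `l`, listed in (nonincreasing) order with multiplicity:
`r¹ ≥ r² ≥ … ≥ r^s`. -/
def oddParts (l : List ℕ) : List ℕ := l.filter (fun x => x % 2 = 1)

/-- The set `ℛ` (conditions stated with 1-based indices `u` for the list of odd parts;
`(oddParts l).getD (u-1) 0` is `r^u`). -/
def Rset : Set (List ℕ) :=
  {l | l ∈ Qset ∧
    (l ≠ [] → l.getD 0 0 % 2 = 1) ∧
    (l ≠ [] → Even l.length → l.getD (l.length - 1) 0 % 2 = 1) ∧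
    (∀ u, 1 ≤ u → u + 1 ≤ (oddParts l).length → u % 2 = 1 →
        (oddParts l).getD u 0 < (oddParts l).getD (u - 1) 0) ∧
    (∀ u, 1 ≤ u → u + 1 ≤ (oddParts l).length → u % 2 = 0 →
        ∀ k < l.length,
          ¬((oddParts l).getD u 0 < l.getD k 0 ∧ l.getD k 0 < (oddParts l).getD (u - 1) 0))}

/-- `ℛ_N = ℛ ∩ 𝒬_N`. -/
def RN (N : ℕ) : Set (List ℕ) := {l | l ∈ Rset ∧ l.sum = N}

/-- The `t`-th entry (0-indexed; `t` corresponds to the 1-based index `t+1`) of `Ξ(l)`: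
`l_t + ψ(t)` where `ψ(t) = 1` if `t+1` is odd and `l_t < l_x` for all `x < t`;
`ψ(t) = -1` if `t+1` is even and `l_x < l_t` for all `x > t` in range; `ψ(t) = 0` else. -/
def xiEntry (l : List ℕ) (t : ℕ) : ℕ :=
  if (t + 1) % 2 = 1 ∧ ∀ x < t, l.getD t 0 < l.getD x 0 then l.getD t 0 + 1
  else if (t + 1) % 2 = 0 ∧ ∀ x < l.length, t < x → l.getD x 0 < l.getD t 0 then
    l.getD t 0 - 1
  else l.getD t 0

/-- The map `Ξ : 𝒮^κ → 𝒫¹`; a final part `1` is appended when `σ + κ` is odd. -/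
def xi (κ : ℕ) (l : List ℕ) : List ℕ :=
  (List.range l.length).map (xiEntry l) ++ (if (l.length + κ) % 2 = 1 then [1] else [])

/-!
Read the parts after the first in pairs `(r₂, r₃), (r₄, r₅), …`. On a nonincreasing list of even
parts, `Ξ` adds `1` to the first part and replaces each pair `a ≥ b` by `(a - 1, b + 1)` if `a > b`
and keeps it if `a = b`; the appended part `1` comes from the pair `(a, 0)`. So `Ξ(r_*)` is an odd
part followed by pairs of odd parts and pairs of equal even parts, each pair bounded by the part
before it, and conditions (i)–(iv) of `ℛ` say exactly that a list has this shape
(`cons_mem_Rset_iff`). Rounding the parts at odd positions down and those at even positions up to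
even numbers, and dropping a final `0`, inverts `Ξ`.
-/

def xiTail : List ℕ → List ℕ
  | [] => []
  | [a] => [a - 1]
  | a :: b :: t => if b < a then (a - 1) :: (b + 1) :: xiTail t else a :: b :: xiTail t

def xiLocal : List ℕ → List ℕ
  | [] => []
  | a :: s => (a + 1) :: xiTail s

def xiTailInv : List ℕ → List ℕ
  | [] => []
  | [z] => [z + z % 2]
  | x :: y :: t => (x + x % 2) :: (y - y % 2) :: xiTailInv t

def xiLocalInv : List ℕ → List ℕ
  | [] => []
  | m :: t => (m - m % 2) :: xiTailInv t

def padZero (κ : ℕ) (l : List ℕ) : List ℕ :=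
  l ++ if (l.length + κ) % 2 = 1 then [0] else []

@[simp] lemma length_xiTail (s : List ℕ) : (xiTail s).length = s.length := by
  induction s using List.twoStepInduction <;> grind [xiTail]

@[simp] lemma length_xiTailInv (t : List ℕ) : (xiTailInv t).length = t.length := by
  induction t using List.twoStepInduction <;> simp_all [xiTailInv]

lemma xiTailInv_xiTail {s : List ℕ} (hs : ∀ x ∈ s, x % 2 = 0) : xiTailInv (xiTail s) = s := by
  induction s using List.twoStepInduction with
  | nil => rfl
  | singleton a =>
    have := hs a (by simp)
    simp only [xiTail, xiTailInv, List.cons.injEq, and_true]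
    omega
  | cons_cons a b t ih _ =>
    have ha := hs a (by simp); have hb := hs b (by simp)
    have := ih fun x hx => hs x (by simp [hx])
    simp only [xiTail]
    split_ifs <;> simp only [xiTailInv, this, List.cons.injEq, and_true] <;> omega

lemma xiTail_append_zero {s : List ℕ} (hs : Odd s.length) (hp : ∀ x ∈ s, 0 < x) :
    xiTail (s ++ [0]) = xiTail s ++ [1] := by
  induction s using List.twoStepInduction with
  | nil => simp at hs
  | singleton a => simp [xiTail, hp a (by simp)]
  | cons_cons a b t ih _ =>
    have := ih (by simpa [Nat.odd_add_one] using hs) fun x hx => hp x (by simp [hx])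
    grind [xiTail]

lemma sum_xiTail {s : List ℕ} (hp : ∀ x ∈ s, 0 < x) :
    (xiTail s).sum + s.length % 2 = s.sum := by
  induction s using List.twoStepInduction with
  | nil => rfl
  | singleton a =>
    have := hp a (by simp)
    simp only [xiTail, List.sum_singleton, List.length_singleton]
    omega
  | cons_cons a b t ih _ =>
    have := ih fun x hx => hp x (by simp [hx])
    have := hp a (by simp)
    simp only [xiTail, List.length_cons]
    split_ifs <;> simp only [List.sum_cons] <;> omega

lemma xiLocalInv_xiLocal {l : List ℕ} (hl : ∀ x ∈ l, x % 2 = 0) : xiLocalInv (xiLocal l) = l := by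
  cases l with
  | nil => rfl
  | cons a s =>
    have := hl a (by simp)
    simp only [xiLocal, xiLocalInv, xiTailInv_xiTail (s := s) fun x hx => hl x (by simp [hx])]
    congr 1; omega

lemma getD_xiTail (s : List ℕ) {i : ℕ} (hi : i < s.length) :
    (xiTail s).getD i 0 =
      if i % 2 = 0 then
        if s.getD (i + 1) 0 < s.getD i 0 then s.getD i 0 - 1 else s.getD i 0
      else if s.getD i 0 < s.getD (i - 1) 0 then s.getD i 0 + 1 else s.getD i 0 := by
  induction s using List.twoStepInduction generalizing i with
  | nil => simp at hi
  | singleton a =>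
    obtain rfl : i = 0 := by simpa using hi
    simp only [xiTail, List.getD_cons_zero, Nat.zero_mod, ↓reduceIte, zero_add, List.getD_cons_succ,
      List.getD_nil]
    split_ifs <;> omega
  | cons_cons a b t ih _ =>
    match i, hi with
    | 0, _ => simp only [xiTail]; split_ifs <;> grind
    | 1, _ => simp only [xiTail]; split_ifs <;> grind
    | k + 2, hi =>
      have hL : (xiTail (a :: b :: t)).getD (k + 2) 0 = (xiTail t).getD k 0 := by
        simp only [xiTail]; split_ifs <;> rfl
      have hR : ∀ n, (a :: b :: t).getD (n + 2) 0 = t.getD n 0 := fun _ => rfl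
      rw [hL, ih (by simpa using hi)]
      simp only [show k + 2 + 1 = k + 1 + 2 by omega, hR]
      rcases Nat.mod_two_eq_zero_or_one k with h | h
      · simp [h, show (k + 2) % 2 = 0 by omega]
      · rw [show k + 2 - 1 = k - 1 + 2 by omega, hR]
        simp [h, show (k + 2) % 2 = 1 by omega]

lemma getD_le_getD_of_pairwise {l : List ℕ} (hs : l.Pairwise (· ≥ ·)) {i j : ℕ} (hij : i ≤ j)
    (hj : j < l.length) : l.getD j 0 ≤ l.getD i 0 := by
  rcases hij.eq_or_lt with rfl | hlt
  · exact le_rfl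
  · rw [List.getD_eq_getElem _ _ hj, List.getD_eq_getElem _ _ (hlt.trans hj)]
    exact List.pairwise_iff_getElem.1 hs i j _ _ hlt

/-- In a nonincreasing list, "first (last) occurrence of its value" is a comparison with the
left (right) neighbour; the zero beyond the end plays the right neighbour of the last part. -/
lemma xiEntry_eq {l : List ℕ} (hs : l.Pairwise (· ≥ ·)) (hp : ∀ x ∈ l, 0 < x) {t : ℕ}
    (ht : t < l.length) :
    xiEntry l t =
      if t % 2 = 0 then
        if t = 0 ∨ l.getD t 0 < l.getD (t - 1) 0 then l.getD t 0 + 1 else l.getD t 0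
      else if l.getD (t + 1) 0 < l.getD t 0 then l.getD t 0 - 1 else l.getD t 0 := by
  have hpos : 0 < l.getD t 0 := by
    rw [List.getD_eq_getElem _ _ ht]; exact hp _ (List.getElem_mem ht)
  have hfirst : (∀ x < t, l.getD t 0 < l.getD x 0) ↔ (t = 0 ∨ l.getD t 0 < l.getD (t - 1) 0) :=
    ⟨fun h => t.eq_zero_or_pos.imp_right fun h0 => h _ (by omega),
      fun h x hx => h.elim (by omega) fun h' =>
        h'.trans_le (getD_le_getD_of_pairwise hs (by omega) (by omega))⟩
  have hlast : (∀ x < l.length, t < x → l.getD x 0 < l.getD t 0) ↔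
      l.getD (t + 1) 0 < l.getD t 0 := by
    refine ⟨fun h => ?_, fun h x hx htx => (getD_le_getD_of_pairwise hs htx hx).trans_lt h⟩
    rcases Nat.lt_or_ge (t + 1) l.length with h1 | h1
    · exact h _ h1 (by omega)
    · rwa [List.getD_eq_default _ _ h1]
  unfold xiEntry
  rcases Nat.mod_two_eq_zero_or_one t with h | h
  · simp only [h, hfirst, show (t + 1) % 2 = 1 by omega, true_and, one_ne_zero, false_and,
      ↓reduceIte]
  · simp only [h, hlast, show (t + 1) % 2 = 0 by omega, true_and, zero_ne_one, one_ne_zero,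
      false_and, ↓reduceIte]

lemma map_xiEntry_range {l : List ℕ} (hs : l.Pairwise (· ≥ ·)) (hp : ∀ x ∈ l, 0 < x) :
    (List.range l.length).map (xiEntry l) = xiLocal l := by
  refine List.ext_getElem (by cases l <;> simp [xiLocal]) fun t h₁ h₂ => ?_
  simp only [List.getElem_map, List.getElem_range]
  rw [xiEntry_eq hs hp (by simpa using h₁)]
  match l, t, h₂ with
  | a :: s, 0, _ => simp [xiLocal]
  | a :: s, i + 1, h₂ =>
    have hi : i < s.length := by simpa [xiLocal] using h₂
    have := getD_xiTail s hi
    rw [← List.getD_eq_getElem _ 0]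
    simp only [xiLocal, List.getD_cons_succ, this]
    rcases Nat.mod_two_eq_zero_or_one i with h | h
    · simp [h, Nat.add_mod]
    · obtain ⟨k, rfl⟩ : ∃ k, i = k + 1 := ⟨i - 1, by omega⟩
      simp [Nat.add_mod, h]

lemma xiLocal_append_zero {l : List ℕ} (hl : Even l.length) (hp : ∀ x ∈ l, 0 < x) :
    xiLocal (l ++ [0]) = xiLocal l ++ [1] := by
  cases l with
  | nil => rfl
  | cons a s =>
    simp only [List.cons_append, xiLocal, List.cons.injEq, true_and]
    exact xiTail_append_zero (by simpa [Nat.even_add_one] using hl) fun x hx => hp x (by simp [hx])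

lemma xi_eq_xiLocal_append {κ : ℕ} {l : List ℕ} (hs : l.Pairwise (· ≥ ·)) (hp : ∀ x ∈ l, 0 < x) :
    xi κ l = xiLocal l ++ if (l.length + κ) % 2 = 1 then [1] else [] := by
  rw [xi, map_xiEntry_range hs hp]

lemma xi_eq_xiLocal_padZero {κ : ℕ} (hκ : κ ≤ 1) {l : List ℕ} (hl : l ∈ SK κ) :
    xi κ l = xiLocal (padZero κ l) := by
  obtain ⟨⟨hs, hp⟩, -, hκl⟩ := hl
  rw [xi_eq_xiLocal_append hs hp, padZero]
  split_ifs with h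
  · have : κ ≠ 0 := fun h0 => by have := Nat.even_iff.1 (hκl h0); omega
    rw [xiLocal_append_zero (Nat.even_iff.2 (by omega)) hp]
  · simp

lemma sum_xi {κ : ℕ} (hκ : κ ≤ 1) {l : List ℕ} (hl : l ∈ SK κ) : (xi κ l).sum = l.sum + κ := by
  obtain ⟨⟨hs, hp⟩, -, hκl⟩ := hl
  rw [xi_eq_xiLocal_append hs hp]
  cases l with
  | nil => interval_cases κ <;> simp [xiLocal]
  | cons a s =>
    have := sum_xiTail (s := s) fun x hx => hp x (by simp [hx])
    have hκs : κ = 0 → s.length % 2 = 1 := fun h => by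
      have := Nat.even_iff.1 (hκl h); simp only [List.length_cons] at this; omega
    simp only [xiLocal, List.sum_append, List.sum_cons, List.length_cons]
    split_ifs <;> simp only [List.sum_cons, List.sum_nil, add_zero] <;> omega

/-- Conditions (iii) and (iv) of `ℛ` on consecutive odd parts `oᵢ ≥ oᵢ₊₁` (0-based, so `u = i + 1`),
with the parity of the index shifted by `j`; `Rset` asks for `OddPartsChain 0`. -/
def OddPartsChain (j : ℕ) (c : List ℕ) : Prop :=
  ∀ i, i + 1 < (oddParts c).length →
    ((i + j) % 2 = 0 → (oddParts c).getD (i + 1) 0 < (oddParts c).getD i 0) ∧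
    ((i + j) % 2 = 1 → ∀ y ∈ c, ¬((oddParts c).getD (i + 1) 0 < y ∧ y < (oddParts c).getD i 0))

lemma oddParts_cons_of_even {x : ℕ} (hx : x % 2 = 0) (c : List ℕ) :
    oddParts (x :: c) = oddParts c := by
  simp [oddParts, hx]

lemma oddParts_cons_of_odd {x : ℕ} (hx : x % 2 = 1) (c : List ℕ) :
    oddParts (x :: c) = x :: oddParts c := by
  simp [oddParts, hx]

@[simp] lemma mem_oddParts {o : ℕ} {c : List ℕ} : o ∈ oddParts c ↔ o ∈ c ∧ o % 2 = 1 := by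
  simp [oddParts]

lemma getD_oddParts_mem {c : List ℕ} {i : ℕ} (hi : i < (oddParts c).length) :
    (oddParts c).getD i 0 ∈ c := by
  rw [List.getD_eq_getElem _ _ hi]
  exact (mem_oddParts.1 (List.getElem_mem hi)).1

lemma oddPartsChain_add_two {j : ℕ} {c : List ℕ} : OddPartsChain (j + 2) c ↔ OddPartsChain j c := by
  simp only [OddPartsChain, show ∀ i, (i + (j + 2)) % 2 = (i + j) % 2 by omega]

lemma forall_mem_cons_not_between_iff {x a b : ℕ} {c : List ℕ} (hb : b ≤ x) :
    (∀ y ∈ x :: c, ¬(a < y ∧ y < b)) ↔ ∀ y ∈ c, ¬(a < y ∧ y < b) := by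
  simp only [List.mem_cons, forall_eq_or_imp, and_iff_right_iff_imp]
  intro _
  omega

lemma oddPartsChain_cons_of_even {j x : ℕ} {c : List ℕ} (hx : x % 2 = 0) (hc : ∀ y ∈ c, y ≤ x) :
    OddPartsChain j (x :: c) ↔ OddPartsChain j c := by
  simp only [OddPartsChain, oddParts_cons_of_even hx]
  refine forall_congr' fun i => forall_congr' fun hi => and_congr_right' <| imp_congr_right
    fun _ => forall_mem_cons_not_between_iff (hc _ (getD_oddParts_mem (by omega)))

lemma oddPartsChain_cons_of_odd {j x : ℕ} {c : List ℕ} (hx : x % 2 = 1) (hc : ∀ y ∈ c, y ≤ x) :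
    OddPartsChain j (x :: c) ↔
      (∀ o ∈ (oddParts c).head?,
        (j % 2 = 0 → o < x) ∧ (j % 2 = 1 → ∀ y ∈ c, ¬(o < y ∧ y < x))) ∧
      OddPartsChain (j + 1) c := by
  unfold OddPartsChain
  rw [← Nat.and_forall_add_one, oddParts_cons_of_odd hx]
  refine and_congr ?_ (forall_congr' fun i => ?_)
  · cases oddParts c with
    | nil => simp
    | cons o os =>
      simp only [List.length_cons, zero_add, List.getD_cons_succ, List.getD_cons_zero,
        List.head?_cons, Option.mem_def, Option.some.injEq, forall_eq',
        forall_mem_cons_not_between_iff le_rfl]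
      exact ⟨fun h => h (by omega), fun h _ => h⟩
  · simp only [List.length_cons, List.getD_cons_succ, show i + 1 + j = i + (j + 1) by omega,
      Nat.add_lt_add_iff_right]
    exact imp_congr_right fun hi => and_congr_right' <| imp_congr_right fun _ =>
      forall_mem_cons_not_between_iff (hc _ (getD_oddParts_mem (by omega)))

lemma even_length_of_even_count {c : List ℕ} (h : ∀ a ∈ c, Even (c.count a)) : Even c.length := by
  rw [← List.sum_toFinset_count_eq_length]
  exact Finset.even_sum _ fun a ha => h a (List.mem_toFinset.1 ha)

lemma getD_length_sub_one_cons {a : ℕ} {t : List ℕ} (ht : t ≠ []) :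
    (a :: t).getD ((a :: t).length - 1) 0 = t.getD (t.length - 1) 0 := by
  obtain ⟨b, t, rfl⟩ := List.exists_cons_of_ne_nil ht
  simp

lemma getD_length_sub_one_mem {t : List ℕ} (ht : t ≠ []) : t.getD (t.length - 1) 0 ∈ t := by
  rw [List.getD_eq_getElem _ _ (by have := List.length_pos_iff.2 ht; omega)]
  exact List.getElem_mem _

lemma last_odd_cons_cons_iff {x y : ℕ} {t : List ℕ} :
    (Odd (x :: y :: t).length → (x :: y :: t).getD ((x :: y :: t).length - 1) 0 % 2 = 1) ↔
      (Odd t.length → t.getD (t.length - 1) 0 % 2 = 1) := by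
  rcases eq_or_ne t [] with rfl | ht
  · simp
  · rw [getD_length_sub_one_cons (List.cons_ne_nil _ _), getD_length_sub_one_cons ht]
    simp [Nat.odd_add_one]

lemma pairwise_ge_cons_cons {p x : ℕ} {t : List ℕ} :
    (p :: x :: t).Pairwise (· ≥ ·) ↔ x ≤ p ∧ (x :: t).Pairwise (· ≥ ·) := by
  rw [← List.isChain_iff_pairwise, ← List.isChain_iff_pairwise, List.isChain_cons_cons]

lemma even_count_cons_cons_iff {x y : ℕ} {t : List ℕ} (hxy : y = x ∨ x % 2 = 1 ∧ y % 2 = 1) :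
    (∀ j, j % 2 = 0 → Even ((x :: y :: t).count j)) ↔ ∀ j, j % 2 = 0 → Even (t.count j) := by
  refine forall_congr' fun j => imp_congr_right fun hj => ?_
  simp only [List.count_cons, beq_iff_eq]
  rcases hxy with rfl | ⟨hx, hy⟩
  · split_ifs <;> simp [Nat.even_add]
  · simp [show x ≠ j by omega, show y ≠ j by omega]

/-- Conditions (i)–(iv) of `ℛ` as they constrain the parts `t` that follow a part `p` at an
odd position. -/
structure RTailSpec (p : ℕ) (t : List ℕ) : Prop where
  sorted : (p :: t).Pairwise (· ≥ ·)
  pos : ∀ x ∈ t, 0 < x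
  even_count : ∀ j, j % 2 = 0 → Even (t.count j)
  last_odd : Odd t.length → t.getD (t.length - 1) 0 % 2 = 1
  head_lt : ∀ o ∈ (oddParts t).head?, o < p
  chain : OddPartsChain 1 t

lemma rTailSpec_nil (p : ℕ) : RTailSpec p [] :=
  ⟨by simp, by simp, by simp, by simp, by simp [oddParts], fun i hi => by simp [oddParts] at hi⟩

lemma rTailSpec_singleton {p z : ℕ} (hz : z % 2 = 1) (hzp : z < p) : RTailSpec p [z] where
  sorted := List.pairwise_pair.2 hzp.le
  pos x hx := by rw [List.mem_singleton.1 hx]; omega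
  even_count j hj := by simp [show z ≠ j by omega]
  last_odd _ := by simpa
  head_lt := by simp [oddParts, hz, hzp]
  chain i hi := by simp [oddParts, hz] at hi

lemma RTailSpec.of_singleton {p z : ℕ} (h : RTailSpec p [z]) : z % 2 = 1 ∧ z < p := by
  have hz : z % 2 = 1 := by simpa using h.last_odd (by simp)
  exact ⟨hz, h.head_lt z (by simp [oddParts, hz])⟩

lemma RTailSpec.cons_cons_of_even {p x : ℕ} {t : List ℕ} (hx : x % 2 = 0) (hx0 : 0 < x)
    (hxp : x ≤ p) (h : RTailSpec x t) : RTailSpec p (x :: x :: t) where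
  sorted := pairwise_ge_cons_cons.2 ⟨hxp, pairwise_ge_cons_cons.2 ⟨le_rfl, h.sorted⟩⟩
  pos := by simpa [hx0] using h.pos
  even_count := (even_count_cons_cons_iff (.inl rfl)).2 h.even_count
  last_odd := last_odd_cons_cons_iff.2 h.last_odd
  head_lt o ho := by
    rw [oddParts_cons_of_even hx, oddParts_cons_of_even hx] at ho
    exact (h.head_lt o ho).trans_le hxp
  chain := by
    have hle : ∀ y ∈ t, y ≤ x := (List.pairwise_cons.1 h.sorted).1
    rw [oddPartsChain_cons_of_even hx (by simpa using hle), oddPartsChain_cons_of_even hx hle]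
    exact h.chain

lemma RTailSpec.cons_cons_of_odd {p x y : ℕ} {t : List ℕ} (hx : x % 2 = 1) (hy : y % 2 = 1)
    (hyx : y ≤ x) (hxp : x < p) (h : RTailSpec y t) : RTailSpec p (x :: y :: t) where
  sorted := pairwise_ge_cons_cons.2 ⟨hxp.le, pairwise_ge_cons_cons.2 ⟨hyx, h.sorted⟩⟩
  pos := by simpa [show 0 < x by omega, show 0 < y by omega] using h.pos
  even_count := (even_count_cons_cons_iff (.inr ⟨hx, hy⟩)).2 h.even_count
  last_odd := last_odd_cons_cons_iff.2 h.last_odd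
  head_lt o ho := by
    obtain rfl : x = o := by simpa [oddParts_cons_of_odd hx] using ho
    exact hxp
  chain := by
    have hle : ∀ z ∈ t, z ≤ y := (List.pairwise_cons.1 h.sorted).1
    have hle' : ∀ z ∈ y :: t, z ≤ y := by simpa using hle
    rw [oddPartsChain_cons_of_odd hx fun z hz => (hle' z hz).trans hyx,
      oddPartsChain_cons_of_odd hy hle, show 1 + 1 + 1 = 1 + 2 from rfl, oddPartsChain_add_two]
    refine ⟨fun o ho => ⟨by omega, fun _ z hz => ?_⟩,
      fun o ho => ⟨fun _ => h.head_lt o ho, by omega⟩, h.chain⟩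
    obtain rfl : y = o := by simpa [oddParts_cons_of_odd hy] using ho
    have := hle' z hz
    omega

lemma RTailSpec.of_cons_cons_of_even {p x y : ℕ} {t : List ℕ} (hx : x % 2 = 0)
    (h : RTailSpec p (x :: y :: t)) : y = x ∧ 0 < x ∧ x ≤ p ∧ RTailSpec x t := by
  obtain ⟨hxp, hyx, hs⟩ := pairwise_ge_cons_cons.1 h.sorted |>.imp_right pairwise_ge_cons_cons.1
  have hle : ∀ z ∈ t, z ≤ y := (List.pairwise_cons.1 hs).1
  obtain rfl : y = x := by
    have hx2 : 2 ≤ (x :: y :: t).count x := by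
      obtain ⟨k, hk⟩ := h.even_count x hx
      have := List.count_pos_iff.2 (List.mem_cons_self (a := x) (l := y :: t))
      omega
    have hmem : x ∈ y :: t := List.count_pos_iff.1 (by rw [List.count_cons_self] at hx2; omega)
    rcases List.mem_cons.1 hmem with rfl | hxt
    exacts [rfl, le_antisymm hyx (hle x hxt)]
  refine ⟨rfl, h.pos y (by simp), hxp, hs, fun z hz => h.pos z (by simp [hz]),
    (even_count_cons_cons_iff (.inl rfl)).1 h.even_count, last_odd_cons_cons_iff.1 h.last_odd,
    fun o ho => ?_, ?_⟩
  · obtain ⟨hot, hodd⟩ := mem_oddParts.1 (List.mem_of_mem_head? ho)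
    have := hle o hot
    omega
  · have := h.chain
    rwa [oddPartsChain_cons_of_even hx (by simpa using hle), oddPartsChain_cons_of_even hx hle]
      at this

/-- A pair `(x, y)` with `x` odd and `y` even is impossible: either an odd part follows `y`, and
`y` lies strictly between it and `x`, or none does, and the length is odd while the last part is
even. -/
lemma RTailSpec.of_cons_cons_of_odd {p x y : ℕ} {t : List ℕ} (hx : x % 2 = 1)
    (h : RTailSpec p (x :: y :: t)) : y % 2 = 1 ∧ y ≤ x ∧ x < p ∧ RTailSpec y t := by
  obtain ⟨-, hyx, hs⟩ := pairwise_ge_cons_cons.1 h.sorted |>.imp_right pairwise_ge_cons_cons.1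
  have hle : ∀ z ∈ t, z ≤ y := (List.pairwise_cons.1 hs).1
  have hle' : ∀ z ∈ y :: t, z ≤ y := by simpa using hle
  have hxp : x < p := h.head_lt x (by simp [oddParts_cons_of_odd hx])
  have hc := h.chain
  rw [oddPartsChain_cons_of_odd hx fun z hz => (hle' z hz).trans hyx] at hc
  obtain ⟨hadj, hc⟩ := hc
  have hy : y % 2 = 1 := by
    by_contra hy
    cases ho : (oddParts (y :: t)).head? with
    | none =>
      have hall : ∀ z ∈ y :: t, z % 2 = 0 := fun z hz => by
        have : z ∉ oddParts (y :: t) := by simp [List.head?_eq_none_iff.1 ho]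
        simp only [mem_oddParts, hz, true_and] at this
        omega
      have heven : Even (y :: t).length := even_length_of_even_count fun a ha => by
        have := h.even_count a (hall a ha)
        rwa [List.count_cons_of_ne (by have := hall a ha; omega)] at this
      have := h.last_odd (Nat.odd_add_one.2 (Nat.not_odd_iff_even.2 heven))
      rw [getD_length_sub_one_cons (by simp)] at this
      have := hall _ (getD_length_sub_one_mem (List.cons_ne_nil y t))
      omega
    | some o =>
      obtain ⟨hot, hodd⟩ := mem_oddParts.1 (List.mem_of_mem_head? ho)
      have := hle' o hot
      exact (hadj o ho).2 rfl y (by simp) ⟨by omega, by omega⟩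
  rw [oddPartsChain_cons_of_odd hy hle, show 1 + 1 + 1 = 1 + 2 from rfl,
    oddPartsChain_add_two] at hc
  exact ⟨hy, hyx, hxp, hs, fun z hz => h.pos z (by simp [hz]),
    (even_count_cons_cons_iff (.inr ⟨hx, hy⟩)).1 h.even_count, last_odd_cons_cons_iff.1 h.last_odd,
    fun o ho => (hc.1 o ho).1 rfl, hc.2⟩

/-- After its first part, an element of `ℛ` reads as pairs `(r₂, r₃), (r₄, r₅), …` of equal even
parts or of odd parts, possibly followed by one odd part; `p` is the part preceding `t`. -/
inductive RTail : ℕ → List ℕ → Prop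
  | nil (p : ℕ) : RTail p []
  | single {p z : ℕ} : z % 2 = 1 → z < p → RTail p [z]
  | evenPair {p e : ℕ} {t : List ℕ} : e % 2 = 0 → 0 < e → e ≤ p → RTail e t → RTail p (e :: e :: t)
  | oddPair {p x y : ℕ} {t : List ℕ} :
      x % 2 = 1 → y % 2 = 1 → y ≤ x → x < p → RTail y t → RTail p (x :: y :: t)

lemma rTail_iff_rTailSpec {p : ℕ} {t : List ℕ} : RTail p t ↔ RTailSpec p t := by
  refine ⟨fun h => ?_, fun h => ?_⟩
  · induction h with
    | nil p => exact rTailSpec_nil p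
    | single hz hzp => exact rTailSpec_singleton hz hzp
    | evenPair he he0 hep _ ih => exact ih.cons_cons_of_even he he0 hep
    | oddPair hx hy hyx hxp _ ih => exact ih.cons_cons_of_odd hx hy hyx hxp
  · induction t using List.twoStepInduction generalizing p with
    | nil => exact .nil p
    | singleton z => exact .single h.of_singleton.1 h.of_singleton.2
    | cons_cons x y t ih _ =>
      rcases Nat.mod_two_eq_zero_or_one x with hx | hx
      · obtain ⟨rfl, hx0, hxp, ht⟩ := h.of_cons_cons_of_even hx
        exact .evenPair hx hx0 hxp (ih ht)
      · obtain ⟨hy, hyx, hxp, ht⟩ := h.of_cons_cons_of_odd hx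
        exact .oddPair hx hy hyx hxp (ih ht)

lemma mem_Rset_iff {c : List ℕ} :
    c ∈ Rset ↔ c ∈ Qset ∧ (c ≠ [] → c.getD 0 0 % 2 = 1) ∧
      (c ≠ [] → Even c.length → c.getD (c.length - 1) 0 % 2 = 1) ∧ OddPartsChain 0 c := by
  refine and_congr_right' <| and_congr_right' <| and_congr_right' ⟨fun ⟨h3, h4⟩ i hi => ?_,
    fun h => ⟨fun u hu1 hu2 hu => ?_, fun u hu1 hu2 hu k hk => ?_⟩⟩
  · refine ⟨fun hi' => h3 (i + 1) (by omega) (by omega) (by omega), fun hi' y hy => ?_⟩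
    obtain ⟨k, hk, rfl⟩ := List.getElem_of_mem hy
    have := h4 (i + 1) (by omega) (by omega) (by omega) k hk
    rwa [List.getD_eq_getElem _ _ hk] at this
  · obtain ⟨i, rfl⟩ : ∃ i, u = i + 1 := ⟨u - 1, by omega⟩
    exact (h i (by omega)).1 (by omega)
  · obtain ⟨i, rfl⟩ : ∃ i, u = i + 1 := ⟨u - 1, by omega⟩
    rw [List.getD_eq_getElem _ _ hk]
    exact (h i (by omega)).2 (by omega) _ (List.getElem_mem hk)

lemma cons_mem_Rset_iff {m : ℕ} {t : List ℕ} : m :: t ∈ Rset ↔ m % 2 = 1 ∧ RTail m t := by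
  rw [mem_Rset_iff, rTail_iff_rTailSpec]
  constructor
  · rintro ⟨⟨⟨hs, hp⟩, hq⟩, hm, hlast, hc⟩
    have hm : m % 2 = 1 := hm (by simp)
    have hle : ∀ y ∈ t, y ≤ m := (List.pairwise_cons.1 hs).1
    rw [oddPartsChain_cons_of_odd hm hle] at hc
    refine ⟨hm, hs, fun x hx => hp x (by simp [hx]), fun j hj => ?_, fun hodd => ?_,
      fun o ho => (hc.1 o ho).1 rfl, hc.2⟩
    · simpa [List.count_cons, show m ≠ j by omega] using hq j hj
    · have ht : t ≠ [] := by rintro rfl; simp at hodd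
      have := hlast (by simp) (by simpa [Nat.even_add_one] using hodd)
      rwa [getD_length_sub_one_cons ht] at this
  · rintro ⟨hm, h⟩
    refine ⟨⟨⟨h.sorted, ?_⟩, fun j hj => ?_⟩, fun _ => hm, fun _ heven => ?_, ?_⟩
    · simpa [show 0 < m by omega] using h.pos
    · simpa [List.count_cons, show m ≠ j by omega] using h.even_count j hj
    · have ht : t ≠ [] := by rintro rfl; simp at heven
      rw [getD_length_sub_one_cons ht]
      exact h.last_odd (by simpa [Nat.even_add_one] using heven)
    · rw [oddPartsChain_cons_of_odd hm (List.pairwise_cons.1 h.sorted).1]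
      exact ⟨fun o ho => ⟨fun _ => h.head_lt o ho, by omega⟩, h.chain⟩

lemma rTail_xiTail {p : ℕ} {s : List ℕ} (hs : s.Pairwise (· ≥ ·)) (he : ∀ x ∈ s, x % 2 = 0)
    (hpos : ∀ x ∈ s, 0 < x) (hp : ∀ x ∈ s, x ≤ p) : RTail p (xiTail s) := by
  induction s using List.twoStepInduction generalizing p with
  | nil => exact .nil p
  | singleton a =>
    have := he a (by simp); have := hpos a (by simp); have := hp a (by simp)
    exact .single (by omega) (by omega)
  | cons_cons a b t ih _ =>
    simp only [List.pairwise_cons, List.mem_cons] at hs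
    have := he a (by simp); have := he b (by simp); have := hpos b (by simp)
    have := hp a (by simp); have hba := hs.1 b (.inl rfl)
    have ht := fun {q} => ih (p := q) hs.2.2 (fun x hx => he x (by simp [hx]))
      (fun x hx => hpos x (by simp [hx]))
    simp only [xiTail]
    split_ifs with hlt
    · exact .oddPair (by omega) (by omega) (by omega) (by omega) (ht fun x hx => by
        have := hs.2.1 x hx; omega)
    · obtain rfl : b = a := by omega
      exact .evenPair (by omega) (by omega) (by omega) (ht hs.2.1)

lemma RTail.append_one {p : ℕ} {t : List ℕ} (h : RTail p t) (ht : Odd t.length) :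
    RTail p (t ++ [1]) := by
  induction h with
  | nil => simp at ht
  | single hz hzp => exact .oddPair hz rfl (by omega) hzp (.nil 1)
  | evenPair he he0 hep _ ih =>
    exact .evenPair he he0 hep (ih (by simpa [Nat.odd_add_one] using ht))
  | oddPair hx hy hyx hxp _ ih =>
    exact .oddPair hx hy hyx hxp (ih (by simpa [Nat.odd_add_one] using ht))

lemma RTail.sum_mod_two {p : ℕ} {t : List ℕ} (h : RTail p t) : t.sum % 2 = t.length % 2 := by
  induction h with
  | nil => rfl
  | single hz => simpa using hz
  | evenPair he _ _ _ ih => simp only [List.sum_cons, List.length_cons]; omega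
  | oddPair hx hy _ _ _ ih => simp only [List.sum_cons, List.length_cons]; omega

lemma RTail.eq_nil_of_le_one {p : ℕ} {t : List ℕ} (h : RTail p t) (hp : p ≤ 1) : t = [] := by
  cases h <;> first | rfl | omega

lemma RTail.xiTail_xiTailInv {p : ℕ} {t : List ℕ} (h : RTail p t) : xiTail (xiTailInv t) = t := by
  induction h with
  | nil => rfl
  | single hz => simp [xiTailInv, xiTail, hz]
  | evenPair he _ _ _ ih => simp [xiTailInv, xiTail, he, ih]
  | oddPair hx hy hyx _ _ ih =>
    simp only [xiTailInv, xiTail, hx, hy, ih]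
    rw [if_pos (by omega), Nat.add_sub_cancel, Nat.sub_add_cancel (by omega)]

lemma RTail.xiTailInv_bounded {p : ℕ} {t : List ℕ} (h : RTail p t) :
    (xiTailInv t).Pairwise (· ≥ ·) ∧ ∀ x ∈ xiTailInv t, x % 2 = 0 ∧ x ≤ p := by
  induction h with
  | nil => simp [xiTailInv]
  | single hz hzp =>
    refine ⟨List.pairwise_singleton _ _, ?_⟩
    simp only [xiTailInv, hz, List.mem_singleton, forall_eq]
    omega
  | evenPair he _ hep _ ih =>
    simp only [xiTailInv, he, add_zero, Nat.sub_zero, List.pairwise_cons, List.mem_cons]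
    refine ⟨⟨?_, ?_, ih.1⟩, ?_⟩
    · rintro x (rfl | hx) <;> [exact le_rfl; exact (ih.2 x hx).2]
    · exact fun x hx => (ih.2 x hx).2
    · rintro x (rfl | rfl | hx) <;> [exact ⟨he, hep⟩; exact ⟨he, hep⟩;
        exact ⟨(ih.2 x hx).1, (ih.2 x hx).2.trans hep⟩]
  | @oddPair p x y t hx hy hyx hxp _ ih =>
    simp only [xiTailInv, hx, hy, List.pairwise_cons, List.mem_cons]
    have hle : ∀ z ∈ xiTailInv t, z ≤ y - 1 := fun z hz => by have := ih.2 z hz; omega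
    refine ⟨⟨?_, ?_, ih.1⟩, ?_⟩
    · rintro z (rfl | hz) <;> [omega; (have := hle z hz; omega)]
    · exact fun z hz => hle z hz
    · rintro z (rfl | rfl | hz) <;> [omega; omega; (have := ih.2 z hz; omega)]

lemma RTail.xiTailInv_eq {p : ℕ} {t : List ℕ} (h : RTail p t) :
    ∃ u, (∀ x ∈ u, 0 < x) ∧ (xiTailInv t = u ∨ xiTailInv t = u ++ [0] ∧ Even t.length) := by
  induction h with
  | nil => exact ⟨[], by simp, .inl rfl⟩
  | @single p z hz => exact ⟨[z + 1], by simp, .inl (by simp [xiTailInv, hz])⟩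
  | @evenPair p e t he he0 _ _ ih =>
    obtain ⟨u, hu, hu'⟩ := ih
    refine ⟨e :: e :: u, by simpa [he0] using hu, ?_⟩
    simp only [xiTailInv, he, add_zero, Nat.sub_zero, List.cons_append, List.cons.injEq, true_and,
      List.length_cons, Nat.even_add_one, not_not]
    exact hu'
  | @oddPair p x y t hx hy _ _ ht ih =>
    by_cases hy1 : y = 1
    · subst hy1
      obtain rfl := ht.eq_nil_of_le_one le_rfl
      exact ⟨[x + 1], by simp, .inr ⟨by simp [xiTailInv, hx], by simp⟩⟩
    obtain ⟨u, hu, hu'⟩ := ih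
    refine ⟨(x + 1) :: (y - 1) :: u, by simpa [show 0 < y - 1 by omega] using hu, ?_⟩
    simp only [xiTailInv, hx, hy, List.cons_append, List.cons.injEq, true_and,
      List.length_cons, Nat.even_add_one, not_not]
    exact hu'

lemma xi_mem_RN {κ N : ℕ} (hκ : κ ≤ 1) {l : List ℕ} (hl : l ∈ SKN κ N) : xi κ l ∈ RN (N + κ) := by
  obtain ⟨hSK, hsum⟩ := hl
  refine ⟨?_, by rw [sum_xi hκ hSK, hsum]⟩
  obtain ⟨⟨hs, hp⟩, he, hκl⟩ := hSK
  rw [xi_eq_xiLocal_append hs hp]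
  cases l with
  | nil =>
    interval_cases κ
    · simp [xiLocal, Rset, Qset, IsPartition, oddParts]
    · exact cons_mem_Rset_iff.2 ⟨rfl, .nil 1⟩
  | cons a s =>
    simp only [List.pairwise_cons, List.mem_cons, forall_eq_or_imp] at hs hp he
    have ht : RTail (a + 1) (xiTail s) :=
      rTail_xiTail hs.2 he.2 hp.2 fun x hx => (hs.1 x hx).trans a.le_succ
    rw [xiLocal, List.cons_append, cons_mem_Rset_iff]
    refine ⟨by omega, ?_⟩
    split_ifs with h
    · refine ht.append_one (Nat.odd_iff.2 ?_)
      simp only [List.length_cons] at h hκl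
      have : κ ≠ 0 := fun h0 => by have := Nat.even_iff.1 (hκl h0); omega
      simp only [length_xiTail]
      omega
    · simpa using ht

lemma filter_xiLocalInv_xi {κ : ℕ} (hκ : κ ≤ 1) {l : List ℕ} (hl : l ∈ SK κ) :
    (xiLocalInv (xi κ l)).filter (0 < ·) = l := by
  have hpad : ∀ x ∈ padZero κ l, x % 2 = 0 := by
    simp only [padZero, List.mem_append]
    rintro x (hx | hx)
    · exact hl.2.1 x hx
    · split_ifs at hx <;> simp_all
  rw [xi_eq_xiLocal_padZero hκ hl, xiLocalInv_xiLocal hpad, padZero, List.filter_append,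
    List.filter_eq_self.2 fun x hx => by simpa using hl.1.2 x hx]
  split_ifs <;> simp

lemma xi_injOn {κ N : ℕ} (hκ : κ ≤ 1) : Set.InjOn (xi κ) (SKN κ N) := fun l₁ h₁ l₂ h₂ heq => by
  rw [← filter_xiLocalInv_xi hκ h₁.1, heq, filter_xiLocalInv_xi hκ h₂.1]

lemma RTail.exists_padZero_eq {κ m : ℕ} {t : List ℕ} (hm : m % 2 = 1) (hm1 : m ≠ 1)
    (ht : RTail m t) (hlen : (t.length + 1) % 2 = κ) :
    ∃ l ∈ SK κ, padZero κ l = (m - 1) :: xiTailInv t := by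
  obtain ⟨hsorted, hbound⟩ := ht.xiTailInv_bounded
  obtain ⟨u, hu, hu'⟩ := ht.xiTailInv_eq
  obtain ⟨hpad, hκ0⟩ : padZero κ ((m - 1) :: u) = (m - 1) :: xiTailInv t ∧
      (κ = 0 → Even ((m - 1) :: u).length) := by
    simp only [padZero, List.length_cons, Nat.even_iff]
    rcases hu' with h | ⟨h, heven⟩
    · have := congrArg List.length h
      simp only [length_xiTailInv] at this
      exact ⟨by rw [if_neg (by omega), List.append_nil, h], by omega⟩
    · have hlen' := congrArg List.length h
      simp only [length_xiTailInv, List.length_append, List.length_singleton] at hlen'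
      have := Nat.even_iff.1 heven
      exact ⟨by rw [if_pos (by omega), h, List.cons_append], by omega⟩
  have hsub : ((m - 1) :: u).Sublist ((m - 1) :: xiTailInv t) := by
    rw [← hpad, padZero]; exact List.sublist_append_left _ _
  refine ⟨(m - 1) :: u, ⟨⟨?_, ?_⟩, fun x hx => ?_, hκ0⟩, hpad⟩
  · refine (List.pairwise_cons.2 ⟨fun x hx => ?_, hsorted⟩).sublist hsub
    have := hbound x hx; omega
  · simpa [show 0 < m - 1 by omega] using hu
  · rcases List.mem_cons.1 (hsub.subset hx) with rfl | hx
    exacts [by omega, (hbound x hx).1]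

lemma exists_xi_eq_cons {κ m : ℕ} {t : List ℕ} (hκ : κ ≤ 1) (hm : m % 2 = 1) (ht : RTail m t)
    (hlen : (t.length + 1) % 2 = κ) : ∃ l ∈ SK κ, xi κ l = m :: t := by
  by_cases hm1 : m = 1
  · subst hm1
    obtain rfl := ht.eq_nil_of_le_one le_rfl
    obtain rfl : κ = 1 := by simpa using hlen.symm
    exact ⟨[], ⟨⟨by simp, by simp⟩, by simp, by simp⟩, by simp [xi]⟩
  obtain ⟨l, hl, hpad⟩ := ht.exists_padZero_eq hm hm1 hlen
  refine ⟨l, hl, ?_⟩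
  rw [xi_eq_xiLocal_padZero hκ hl, hpad, xiLocal, ht.xiTail_xiTailInv,
    Nat.sub_add_cancel (by omega)]

lemma xi_surjOn {κ N : ℕ} (hN : Even N) (hκ : κ ≤ 1) :
    Set.SurjOn (xi κ) (SKN κ N) (RN (N + κ)) := by
  rintro c ⟨hc, hsum⟩
  cases c with
  | nil =>
    obtain ⟨rfl, rfl⟩ : N = 0 ∧ κ = 0 := by simp only [List.sum_nil] at hsum; omega
    exact ⟨[], ⟨⟨⟨by simp, by simp⟩, by simp, by simp⟩, rfl⟩, by simp [xi]⟩
  | cons m t =>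
    obtain ⟨hm, ht⟩ := cons_mem_Rset_iff.1 hc
    have hlen : (t.length + 1) % 2 = κ := by
      have := ht.sum_mod_two
      obtain ⟨k, rfl⟩ := hN
      simp only [List.sum_cons] at hsum
      omega
    obtain ⟨l, hl, hxi⟩ := exists_xi_eq_cons hκ hm ht hlen
    refine ⟨l, ⟨hl, ?_⟩, hxi⟩
    have := sum_xi hκ hl
    rw [hxi, hsum] at this
    omega

/-- for every even `N` and `κ ∈ {0,1}`, the map `Ξ` restricts to a
bijection from `𝒮^κ_N` onto `ℛ_{N+κ}` (in particular it maps `𝒮^κ_N` into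
`ℛ_{N+κ}`, whose elements are nonincreasing lists of positive integers of sum `N+κ`). -/
theorem stmt3 (N κ : ℕ) (hN : Even N) (hκ : κ = 0 ∨ κ = 1) :
    Set.BijOn (xi κ) (SKN κ N) (RN (N + κ)) := by
  have hκ₁ : κ ≤ 1 := by omega
  exact ⟨fun _ hl => xi_mem_RN hκ₁ hl, xi_injOn hκ₁, xi_surjOn hN hκ₁⟩
end
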